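/- arXiv:2011.03793 — 4 statements merged into one kernel-verified Lean document; each statement's English description precedes it below -/
import Mathlib

section
/- Assume the form [·,·] is indefinite and let x ∈ H with [x, x] ≠ 0. Then the set of real numbers { ‖x‖_J : J is a fundamental symmetry of (H, [·,·]) } is exactly the closed half-line [ |[x, x]|^{1/2}, ∞ ). -/
open scoped ComplexOrder

/-- The indefinite (Krein) inner product `[x, y] := ⟪J₀ x, y⟫` induced by the
continuous linear involution `J₀`. -/
noncomputable def kform {H : Type*} [NormedAddCommGroup H] [InnerProductSpace ℂ H]
    (J₀ : H →L[ℂ] H) (x y : H) : ℂ :=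
  inner ℂ (J₀ x) y

/-- `J` is a fundamental symmetry of the Krein space `(H, [·,·])`:
a continuous linear involution, `[·,·]`-selfadjoint, with `[J x, x] > 0` for `x ≠ 0`. -/
def IsFundamentalSymmetry {H : Type*} [NormedAddCommGroup H] [InnerProductSpace ℂ H]
    (J₀ : H →L[ℂ] H) (J : H →L[ℂ] H) : Prop :=
  (∀ x, J (J x) = x) ∧
  (∀ x y, kform J₀ (J x) y = kform J₀ x (J y)) ∧
  (∀ x, x ≠ 0 → 0 < kform J₀ (J x) x)

/-- The `J`-norm `‖x‖_J := [J x, x] ^ (1/2)`. -/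
noncomputable def jnorm {H : Type*} [NormedAddCommGroup H] [InnerProductSpace ℂ H]
    (J₀ : H →L[ℂ] H) (J : H →L[ℂ] H) (x : H) : ℝ :=
  Real.sqrt (kform J₀ (J x) x).re

/-!
The bound `|[x, x]| ≤ [J x, x]` holds for every fundamental symmetry `J`: expand the
nonnegative numbers `[J w, w]` at `w = x ± J x`, which equal `2 ([J x, x] ± [x, x])`.

Conversely, if `G` is a `[·,·]`-unitary operator then `G⁻¹ J₀ G` is a fundamental symmetry with
`[G⁻¹ J₀ G y, y] = ‖G y‖²`. Write `x = α e + β f` with unit vectors `e`, `f` in the `±1`-eigenspaces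
of `J₀` (indefiniteness supplies them when a component of `x` vanishes), so `[x, x] = α² - β²`.
A hyperbolic rotation `G` of the plane spanned by `e` and `f` is `[·,·]`-unitary, and as it ranges
over all of them, `‖G x‖² = (c α + s β)² + (s α + c β)²` takes every value `≥ |α² - β²|` when
`α² - β² ≠ 0`.
-/

section Boost

variable {𝕜 H : Type*} [RCLike 𝕜] [NormedAddCommGroup H] [InnerProductSpace 𝕜 H]

local notation "⟪" a ", " b "⟫" => (inner 𝕜 a b : 𝕜)

variable (𝕜) in
/-- The hyperbolic rotation `e ↦ c e + s f`, `f ↦ s e + c f` of the plane spanned by `e` and `f`,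
extended by the identity on its orthogonal complement. -/
noncomputable def boost (e f : H) (c s : ℝ) : H →L[𝕜] H :=
  ContinuousLinearMap.id 𝕜 H + (innerSL 𝕜 e).smulRight (((c : 𝕜) - 1) • e + (s : 𝕜) • f) +
    (innerSL 𝕜 f).smulRight ((s : 𝕜) • e + ((c : 𝕜) - 1) • f)

theorem boost_apply (e f : H) (c s : ℝ) (y : H) :
    boost 𝕜 e f c s y = y + (((c : 𝕜) - 1) * ⟪e, y⟫ + s * ⟪f, y⟫) • e +
      (s * ⟪e, y⟫ + ((c : 𝕜) - 1) * ⟪f, y⟫) • f := by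
  simp only [boost, add_apply, ContinuousLinearMap.id_apply,
    ContinuousLinearMap.smulRight_apply, innerSL_apply_apply]
  module

variable {e f : H} (he : ‖e‖ = 1) (hf : ‖f‖ = 1) (hef : inner 𝕜 e f = 0)
include he hf hef

theorem norm_ofReal_smul_add_ofReal_smul_sq (a b : ℝ) :
    ‖(a : 𝕜) • e + (b : 𝕜) • f‖ ^ 2 = a ^ 2 + b ^ 2 := by
  have hef' : ⟪(a : 𝕜) • e, (b : 𝕜) • f⟫ = 0 := by simp [inner_smul_left, inner_smul_right, hef]
  rw [sq, norm_add_sq_eq_norm_sq_add_norm_sq_of_inner_eq_zero _ _ hef', norm_smul, norm_smul,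
    RCLike.norm_ofReal, RCLike.norm_ofReal, he, hf]
  simp only [mul_one, abs_mul_abs_self, sq]

theorem boost_smul_add_smul (c s α β : ℝ) :
    boost 𝕜 e f c s ((α : 𝕜) • e + (β : 𝕜) • f) =
      ((c * α + s * β : ℝ) : 𝕜) • e + ((s * α + c * β : ℝ) : 𝕜) • f := by
  have hfe : ⟪f, e⟫ = 0 := inner_eq_zero_symm.mp hef
  simp only [boost_apply, inner_add_right, inner_smul_right, inner_self_eq_one_of_norm_eq_one he,
    inner_self_eq_one_of_norm_eq_one hf, hef, hfe]
  push_cast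
  module

theorem boost_neg_boost {c s : ℝ} (hcs : c ^ 2 - s ^ 2 = 1) (y : H) :
    boost 𝕜 e f c (-s) (boost 𝕜 e f c s y) = y := by
  have hfe : ⟪f, e⟫ = 0 := inner_eq_zero_symm.mp hef
  have hcs' : (c : 𝕜) ^ 2 - (s : 𝕜) ^ 2 = 1 := by exact_mod_cast hcs
  simp only [boost_apply, inner_add_right, inner_smul_right,
    inner_self_eq_one_of_norm_eq_one he, inner_self_eq_one_of_norm_eq_one hf, hef, hfe]
  push_cast
  match_scalars
  · rfl
  · linear_combination ⟪e, y⟫ * hcs'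
  · linear_combination ⟪f, y⟫ * hcs'

variable (𝕜) in
noncomputable def boostEquiv {c s : ℝ} (hcs : c ^ 2 - s ^ 2 = 1) : H ≃L[𝕜] H :=
  .equivOfInverse (boost 𝕜 e f c s) (boost 𝕜 e f c (-s)) (boost_neg_boost he hf hef hcs)
    fun y => by simpa using boost_neg_boost he hf hef (s := -s) (by simpa using hcs) y

end Boost

theorem exists_apply_eq_self_norm_eq_one_and_eq_smul {𝕜 E : Type*} [RCLike 𝕜]
    [NormedAddCommGroup E] [NormedSpace 𝕜 E] {T : E →L[𝕜] E} {w e₀ : E} (hw : T w = w)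
    (he₀ : T e₀ = e₀) (he₀0 : e₀ ≠ 0) :
    ∃ e, T e = e ∧ ‖e‖ = 1 ∧ ∃ α : ℝ, w = (α : 𝕜) • e := by
  rcases eq_or_ne w 0 with rfl | hw0
  · exact ⟨(‖e₀‖⁻¹ : 𝕜) • e₀, by simp [he₀], norm_smul_inv_norm he₀0, 0, by simp⟩
  · refine ⟨(‖w‖⁻¹ : 𝕜) • w, by simp [hw], norm_smul_inv_norm hw0, ‖w‖, ?_⟩
    simp [smul_smul, hw0]

theorem exists_sq_sub_sq_eq_one_and_sq_add_sq_eq {α β R : ℝ} (ht : α ^ 2 - β ^ 2 ≠ 0)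
    (hR : |α ^ 2 - β ^ 2| ≤ R) :
    ∃ c s : ℝ, c ^ 2 - s ^ 2 = 1 ∧ (c * α + s * β) ^ 2 + (s * α + c * β) ^ 2 = R := by
  set t := α ^ 2 - β ^ 2
  obtain ⟨hRt, htR⟩ := abs_le.1 hR
  set p := Real.sqrt ((R + t) / 2)
  set q := Real.sqrt ((R - t) / 2)
  have hp : p ^ 2 = (R + t) / 2 := Real.sq_sqrt (by linarith)
  have hq : q ^ 2 = (R - t) / 2 := Real.sq_sqrt (by linarith)
  -- `(p, q)` is the point with `p² - q² = t` and `p² + q² = R`; `(c, s)` is the boost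
  -- taking `(α, β)` to it, which exists because both points have Minkowski norm `t ≠ 0`.
  refine ⟨(α * p - β * q) / t, (α * q - β * p) / t, ?_, ?_⟩
  · field_simp
    linear_combination (α ^ 2 - β ^ 2) * (hp - hq)
  · have h1 : (α * p - β * q) / t * α + (α * q - β * p) / t * β = p := by
      field_simp; ring
    have h2 : (α * q - β * p) / t * α + (α * p - β * q) / t * β = q := by
      field_simp; ring
    rw [h1, h2, hp, hq]; ring

section Krein

variable {H : Type*} [NormedAddCommGroup H] [InnerProductSpace ℂ H] {J₀ J : H →L[ℂ] H}

local notation "⟪" a ", " b "⟫" => (inner ℂ a b : ℂ)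

theorem IsFundamentalSymmetry.kform_nonneg (hJ : IsFundamentalSymmetry J₀ J) (w : H) :
    0 ≤ kform J₀ (J w) w := by
  rcases eq_or_ne w 0 with rfl | hw
  · simp [kform]
  · exact (hJ.2.2 w hw).le

theorem IsFundamentalSymmetry.norm_kform_self_le (hJ : IsFundamentalSymmetry J₀ J) (x : H) :
    ‖kform J₀ x x‖ ≤ (kform J₀ (J x) x).re := by
  obtain ⟨hJJ, hsymm, -⟩ := id hJ
  have hJxJx : kform J₀ (J x) (J x) = kform J₀ x x := by rw [hsymm, hJJ]
  have hxJx : kform J₀ x (J x) = kform J₀ (J x) x := (hsymm x x).symm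
  have hadd : kform J₀ (J (x + J x)) (x + J x) = 2 * (kform J₀ (J x) x + kform J₀ x x) := by
    simp only [kform, map_add, hJJ, inner_add_left, inner_add_right] at hJxJx hxJx ⊢
    linear_combination hJxJx + hxJx
  have hsub : kform J₀ (J (x - J x)) (x - J x) = 2 * (kform J₀ (J x) x - kform J₀ x x) := by
    simp only [kform, map_sub, hJJ, inner_sub_left, inner_sub_right] at hJxJx hxJx ⊢
    linear_combination -hJxJx + hxJx
  have hplus := hJ.kform_nonneg (x + J x)
  have hminus := hJ.kform_nonneg (x - J x)
  rw [hadd, Complex.nonneg_iff] at hplus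
  rw [hsub, Complex.nonneg_iff] at hminus
  simp only [Complex.mul_re, Complex.mul_im, Complex.add_re, Complex.add_im, Complex.sub_re,
    Complex.sub_im, Complex.re_ofNat, Complex.im_ofNat, zero_mul, sub_zero, add_zero, zero_eq_mul,
    OfNat.ofNat_ne_zero, false_or, Nat.ofNat_pos, mul_nonneg_iff_of_pos_left, sub_nonneg]
    at hplus hminus
  rw [← Complex.abs_re_eq_norm.2 (by linarith), abs_le]
  exact ⟨by linarith, hminus.1⟩

theorem IsFundamentalSymmetry.sqrt_norm_kform_self_le_jnorm (hJ : IsFundamentalSymmetry J₀ J)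
    (x : H) : Real.sqrt ‖kform J₀ x x‖ ≤ jnorm J₀ J x :=
  Real.sqrt_le_sqrt (hJ.norm_kform_self_le x)

section Conjugation

variable (hinv : ∀ x, J₀ (J₀ x) = x) (G : H ≃L[ℂ] H)
  (hG : ∀ a b, kform J₀ (G a) (G b) = kform J₀ a b)
include hinv hG

theorem kform_conj_apply (a b : H) :
    kform J₀ ((G.symm.conjContinuousAlgEquiv J₀) a) b = ⟪G a, G b⟫ := by
  rw [← hG, ContinuousLinearEquiv.conjContinuousAlgEquiv_apply_apply,
    ContinuousLinearEquiv.symm_symm, ContinuousLinearEquiv.apply_symm_apply, kform, hinv]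

theorem jnorm_conj (a : H) :
    jnorm J₀ (G.symm.conjContinuousAlgEquiv J₀) a = ‖G a‖ := by
  rw [jnorm, kform_conj_apply hinv G hG, inner_self_eq_norm_sq_to_K]
  norm_cast
  exact Real.sqrt_sq (norm_nonneg _)

theorem isFundamentalSymmetry_conj (hsa : ∀ x y : H, ⟪J₀ x, y⟫ = ⟪x, J₀ y⟫) :
    IsFundamentalSymmetry J₀ (G.symm.conjContinuousAlgEquiv J₀) := by
  refine ⟨fun a => by simp [hinv], fun a b => ?_, fun a ha => ?_⟩
  · rw [kform_conj_apply hinv G hG, ← hG]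
    simp [kform, hsa, hinv]
  · rw [kform_conj_apply hinv G hG, inner_self_eq_norm_sq_to_K]
    have : G a ≠ 0 := by simpa using ha
    have hpos := Complex.zero_lt_real.2 (pow_pos (norm_pos_iff.2 this) 2)
    push_cast at hpos
    exact hpos

end Conjugation

theorem kform_boost_boost (hsa : ∀ x y : H, ⟪J₀ x, y⟫ = ⟪x, J₀ y⟫) {e f : H}
    (he : ‖e‖ = 1) (hf : ‖f‖ = 1) (hef : ⟪e, f⟫ = 0) (hJe : J₀ e = e) (hJf : J₀ f = -f)
    {c s : ℝ} (hcs : c ^ 2 - s ^ 2 = 1) (a b : H) :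
    kform J₀ (boost ℂ e f c s a) (boost ℂ e f c s b) = kform J₀ a b := by
  have hfe : ⟪f, e⟫ = 0 := inner_eq_zero_symm.mp hef
  have hcs' : (c : ℂ) ^ 2 - (s : ℂ) ^ 2 = 1 := by exact_mod_cast hcs
  have hae : ⟪J₀ a, e⟫ = ⟪a, e⟫ := by rw [hsa, hJe]
  have haf : ⟪J₀ a, f⟫ = -⟪a, f⟫ := by rw [hsa, hJf, inner_neg_right]
  simp only [kform, boost_apply, map_add, map_smul, hJe, hJf, inner_add_left, inner_add_right,
    inner_smul_left, inner_smul_right, inner_neg_left, smul_neg,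
    inner_self_eq_one_of_norm_eq_one he, inner_self_eq_one_of_norm_eq_one hf, hef, hfe, hae, haf,
    map_mul, map_sub, map_one, RCLike.conj_ofReal, inner_conj_symm]
  linear_combination (⟪a, e⟫ * ⟪e, b⟫ - ⟪a, f⟫ * ⟪f, b⟫) * hcs'

theorem add_apply_self_ne_zero_of_kform_pos {u : H} (hu : 0 < kform J₀ u u) : u + J₀ u ≠ 0 := by
  intro h
  have hre := (Complex.pos_iff.1 hu).1
  rw [kform, eq_neg_of_add_eq_zero_right h, inner_neg_left, Complex.neg_re] at hre
  exact (neg_nonpos.2 (inner_self_nonneg (𝕜 := ℂ) (x := u))).not_gt hre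

theorem exists_eq_smul_add_smul (hinv : ∀ x, J₀ (J₀ x) = x)
    (hindef : ∃ u v : H, 0 < kform J₀ u u ∧ kform J₀ v v < 0) (x : H) :
    ∃ e f : H, J₀ e = e ∧ J₀ f = -f ∧ ‖e‖ = 1 ∧ ‖f‖ = 1 ∧
      ∃ α β : ℝ, x = (α : ℂ) • e + (β : ℂ) • f := by
  obtain ⟨u, v, hu, hv⟩ := hindef
  have hfix : ∀ y, J₀ (y + J₀ y) = y + J₀ y := fun y => by rw [map_add, hinv, add_comm]
  have hfix' : ∀ y, (-J₀) (y + (-J₀) y) = y + (-J₀) y := fun y => by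
    simp only [neg_apply, map_add, map_neg, hinv]; abel
  have hv' : 0 < kform (-J₀) v v := by simpa [kform] using hv
  obtain ⟨e, hJe, he, α, hα⟩ := exists_apply_eq_self_norm_eq_one_and_eq_smul (hfix x) (hfix u)
    (add_apply_self_ne_zero_of_kform_pos hu)
  obtain ⟨f, hJf, hf, β, hβ⟩ := exists_apply_eq_self_norm_eq_one_and_eq_smul (hfix' x) (hfix' v)
    (add_apply_self_ne_zero_of_kform_pos hv')
  refine ⟨e, f, hJe, neg_eq_iff_eq_neg.mp hJf, he, hf, α / 2, β / 2, ?_⟩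
  rw [neg_apply] at hβ
  push_cast
  linear_combination (norm := module) (2⁻¹ : ℂ) • hα + (2⁻¹ : ℂ) • hβ

theorem inner_eq_zero_of_apply_eq_self_of_apply_eq_neg (hsa : ∀ x y : H, ⟪J₀ x, y⟫ = ⟪x, J₀ y⟫)
    {e f : H} (hJe : J₀ e = e) (hJf : J₀ f = -f) : ⟪e, f⟫ = 0 := by
  have h := hsa e f
  rw [hJe, hJf, inner_neg_right] at h
  linear_combination h / 2

theorem kform_smul_add_smul {e f : H} (hJe : J₀ e = e) (hJf : J₀ f = -f) (he : ‖e‖ = 1)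
    (hf : ‖f‖ = 1) (hef : ⟪e, f⟫ = 0) (α β : ℝ) :
    kform J₀ ((α : ℂ) • e + (β : ℂ) • f) ((α : ℂ) • e + (β : ℂ) • f) =
      ((α ^ 2 - β ^ 2 : ℝ) : ℂ) := by
  have hfe : ⟪f, e⟫ = 0 := inner_eq_zero_symm.mp hef
  simp only [kform, map_add, map_smul, hJe, hJf, smul_neg, inner_add_left, inner_add_right,
    inner_neg_left, inner_smul_left, inner_smul_right, inner_self_eq_one_of_norm_eq_one he,
    inner_self_eq_one_of_norm_eq_one hf, hef, hfe, Complex.conj_ofReal]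
  push_cast
  ring

theorem exists_isFundamentalSymmetry_jnorm_eq (hinv : ∀ x, J₀ (J₀ x) = x)
    (hsa : ∀ x y : H, ⟪J₀ x, y⟫ = ⟪x, J₀ y⟫)
    (hindef : ∃ u v : H, 0 < kform J₀ u u ∧ kform J₀ v v < 0) {x : H} (hx : kform J₀ x x ≠ 0)
    {r : ℝ} (hr : Real.sqrt ‖kform J₀ x x‖ ≤ r) :
    ∃ J : H →L[ℂ] H, IsFundamentalSymmetry J₀ J ∧ jnorm J₀ J x = r := by
  obtain ⟨e, f, hJe, hJf, he, hf, α, β, rfl⟩ := exists_eq_smul_add_smul hinv hindef x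
  have hef := inner_eq_zero_of_apply_eq_self_of_apply_eq_neg hsa hJe hJf
  rw [kform_smul_add_smul hJe hJf he hf hef, Complex.ofReal_ne_zero] at hx
  rw [kform_smul_add_smul hJe hJf he hf hef, Complex.norm_real, Real.norm_eq_abs,
    Real.sqrt_le_iff] at hr
  obtain ⟨c, s, hcs, hcsx⟩ := exists_sq_sub_sq_eq_one_and_sq_add_sq_eq hx hr.2
  have hG := kform_boost_boost hsa he hf hef hJe hJf hcs
  let G := boostEquiv ℂ he hf hef hcs
  refine ⟨_, isFundamentalSymmetry_conj hinv G hG hsa, ?_⟩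
  -- the `boost` lemmas are stated with the `RCLike` coercion `ℝ → 𝕜`, not `Complex.ofReal`
  rw [jnorm_conj hinv G hG, show G _ = boost ℂ e f c s _ from rfl,
    ← RCLike.ofReal_eq_complex_ofReal, boost_smul_add_smul he hf hef,
    ← sq_eq_sq₀ (norm_nonneg _) hr.1, norm_ofReal_smul_add_ofReal_smul_sq he hf hef, hcsx]

end Krein

theorem range_jnorm_of_form_ne_zero_general
    {H : Type*} [NormedAddCommGroup H] [InnerProductSpace ℂ H]
    (J₀ : H →L[ℂ] H)
    (hinv : ∀ x, J₀ (J₀ x) = x)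
    (hsa : ∀ x y : H, (inner ℂ (J₀ x) y : ℂ) = inner ℂ x (J₀ y))
    (hindef : ∃ u v : H, 0 < kform J₀ u u ∧ kform J₀ v v < 0)
    (x : H) (hx : kform J₀ x x ≠ 0) :
    {r : ℝ | ∃ J : H →L[ℂ] H, IsFundamentalSymmetry J₀ J ∧ jnorm J₀ J x = r} =
      Set.Ici (Real.sqrt ‖kform J₀ x x‖) := by
  ext r
  constructor
  · rintro ⟨J, hJ, rfl⟩
    exact hJ.sqrt_norm_kform_self_le_jnorm x
  · exact exists_isFundamentalSymmetry_jnorm_eq hinv hsa hindef hx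

theorem range_jnorm_of_form_ne_zero
    {H : Type*} [NormedAddCommGroup H] [InnerProductSpace ℂ H] [CompleteSpace H]
    (J₀ : H →L[ℂ] H)
    (hinv : ∀ x, J₀ (J₀ x) = x)
    (hsa : ∀ x y : H, (inner ℂ (J₀ x) y : ℂ) = inner ℂ x (J₀ y))
    (hindef : ∃ u v : H, 0 < kform J₀ u u ∧ kform J₀ v v < 0)
    (x : H) (hx : kform J₀ x x ≠ 0) :
    {r : ℝ | ∃ J : H →L[ℂ] H, IsFundamentalSymmetry J₀ J ∧ jnorm J₀ J x = r} =
      Set.Ici (Real.sqrt ‖kform J₀ x x‖) :=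
  range_jnorm_of_form_ne_zero_general J₀ hinv hsa hindef x hx
end

section
/- Assume the form [·,·] is indefinite, let x ∈ H with [x, x] ≠ 0, and let J be a fundamental symmetry of (H, [·,·]). Then ‖x‖_J = |[x, x]|^{1/2} if and only if J x = x or J x = −x (i.e., x lies in the positive or the negative component of the fundamental decomposition associated with J). -/
open scoped ComplexOrder

/-!
Put `c = [J x, x]` and `d = [x, x]`. Since `J` is an `[·,·]`-selfadjoint involution, `x ± J x` lie
in the positive and negative components, and expanding gives
`[J (x + J x), x + J x] = 2 (d + c)` and `[J (x - J x), x - J x] = 2 (c - d)`.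
Positivity of `[J ·, ·]` makes `a = d + c` and `b = c - d` nonnegative reals, vanishing exactly
when `J x = -x`, resp. `J x = x`. Then `‖x‖_J² = c = (a + b) / 2` while `|[x, x]| = |a - b| / 2`,
and for `a, b ≥ 0` one has `a + b = |a - b|` iff `a = 0` or `b = 0`.
-/

lemma add_eq_abs_sub_iff {a b : ℝ} (ha : 0 ≤ a) (hb : 0 ≤ b) :
    a + b = |a - b| ↔ a = 0 ∨ b = 0 := by
  constructor
  · intro h
    rcases abs_cases (a - b) with ⟨h', -⟩ | ⟨h', -⟩ <;> [right; left] <;> linarith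
  · rintro (rfl | rfl) <;> simp [abs_of_nonneg, *]

lemma Complex.re_eq_norm_iff_of_nonneg {c d : ℂ} (hadd : 0 ≤ d + c) (hsub : 0 ≤ c - d) :
    c.re = ‖d‖ ↔ d + c = 0 ∨ c - d = 0 := by
  obtain ⟨a, ha, hac⟩ := RCLike.nonneg_iff_exists_ofReal.mp hadd
  obtain ⟨b, hb, hbc⟩ := RCLike.nonneg_iff_exists_ofReal.mp hsub
  have hc : c = ((a + b) / 2 : ℝ) := by push_cast; linear_combination -(hac + hbc) / 2
  have hd : d = ((a - b) / 2 : ℝ) := by push_cast; linear_combination -(hac - hbc) / 2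
  rw [← hac, ← hbc, hc, hd, Complex.ofReal_re, Complex.norm_real, Real.norm_eq_abs, abs_div,
    abs_two, div_left_inj' two_ne_zero, add_eq_abs_sub_iff ha hb]
  simp only [RCLike.ofReal_eq_zero]

namespace IsFundamentalSymmetry

variable {H : Type*} [NormedAddCommGroup H] [InnerProductSpace ℂ H] {J₀ J : H →L[ℂ] H}

lemma kform_apply_self_nonneg (hJ : IsFundamentalSymmetry J₀ J) (x : H) :
    0 ≤ kform J₀ (J x) x := by
  rcases eq_or_ne x 0 with rfl | hx
  · simp [kform]
  · exact (hJ.2.2 x hx).le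

lemma kform_apply_self_eq_zero_iff (hJ : IsFundamentalSymmetry J₀ J) {x : H} :
    kform J₀ (J x) x = 0 ↔ x = 0 := by
  refine ⟨fun h ↦ ?_, fun h ↦ by simp [kform, h]⟩
  by_contra hx
  exact (hJ.2.2 x hx).ne' h

lemma kform_apply_apply (hJ : IsFundamentalSymmetry J₀ J) (x y : H) :
    kform J₀ (J x) (J y) = kform J₀ x y := by
  rw [hJ.2.1, hJ.1]

lemma kform_add_apply_self (hJ : IsFundamentalSymmetry J₀ J) (x : H) :
    kform J₀ (J (x + J x)) (x + J x) = 2 * (kform J₀ x x + kform J₀ (J x) x) := by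
  have hsymm := hJ.2.1 x x
  have hJJ := hJ.kform_apply_apply x x
  simp only [kform, map_add, hJ.1, inner_add_left, inner_add_right] at hsymm hJJ ⊢
  rw [← hsymm, hJJ]
  ring

lemma kform_sub_apply_self (hJ : IsFundamentalSymmetry J₀ J) (x : H) :
    kform J₀ (J (x - J x)) (x - J x) = 2 * (kform J₀ (J x) x - kform J₀ x x) := by
  have hsymm := hJ.2.1 x x
  have hJJ := hJ.kform_apply_apply x x
  simp only [kform, map_sub, hJ.1, inner_sub_left, inner_sub_right] at hsymm hJJ ⊢
  rw [← hsymm, hJJ]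
  ring

lemma kform_self_add_apply_nonneg (hJ : IsFundamentalSymmetry J₀ J) (x : H) :
    0 ≤ kform J₀ x x + kform J₀ (J x) x := by
  have h := mul_nonneg (inv_nonneg.mpr zero_le_two) (hJ.kform_apply_self_nonneg (x + J x))
  rwa [kform_add_apply_self hJ, inv_mul_cancel_left₀ two_ne_zero] at h

lemma kform_apply_sub_self_nonneg (hJ : IsFundamentalSymmetry J₀ J) (x : H) :
    0 ≤ kform J₀ (J x) x - kform J₀ x x := by
  have h := mul_nonneg (inv_nonneg.mpr zero_le_two) (hJ.kform_apply_self_nonneg (x - J x))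
  rwa [kform_sub_apply_self hJ, inv_mul_cancel_left₀ two_ne_zero] at h

lemma kform_self_add_apply_eq_zero_iff (hJ : IsFundamentalSymmetry J₀ J) {x : H} :
    kform J₀ x x + kform J₀ (J x) x = 0 ↔ J x = -x := by
  rw [← add_eq_zero_iff_eq_neg', ← hJ.kform_apply_self_eq_zero_iff, kform_add_apply_self hJ,
    mul_eq_zero, or_iff_right two_ne_zero]

lemma kform_apply_sub_self_eq_zero_iff (hJ : IsFundamentalSymmetry J₀ J) {x : H} :
    kform J₀ (J x) x - kform J₀ x x = 0 ↔ J x = x := by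
  rw [eq_comm (a := J x), ← sub_eq_zero (a := x), ← hJ.kform_apply_self_eq_zero_iff,
    kform_sub_apply_self hJ, mul_eq_zero, or_iff_right two_ne_zero]

end IsFundamentalSymmetry

theorem jnorm_eq_sqrt_abs_form_iff_general
    {H : Type*} [NormedAddCommGroup H] [InnerProductSpace ℂ H]
    (J₀ : H →L[ℂ] H)
    (x : H)
    (J : H →L[ℂ] H) (hJ : IsFundamentalSymmetry J₀ J) :
    jnorm J₀ J x = Real.sqrt ‖kform J₀ x x‖ ↔ J x = x ∨ J x = -x := by
  have hre : 0 ≤ (kform J₀ (J x) x).re := (Complex.nonneg_iff.mp (hJ.kform_apply_self_nonneg x)).1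
  rw [jnorm, Real.sqrt_inj hre (norm_nonneg _),
    Complex.re_eq_norm_iff_of_nonneg (hJ.kform_self_add_apply_nonneg x)
      (hJ.kform_apply_sub_self_nonneg x),
    hJ.kform_self_add_apply_eq_zero_iff, hJ.kform_apply_sub_self_eq_zero_iff, or_comm]

theorem jnorm_eq_sqrt_abs_form_iff
    {H : Type*} [NormedAddCommGroup H] [InnerProductSpace ℂ H] [CompleteSpace H]
    (J₀ : H →L[ℂ] H)
    (hinv : ∀ x, J₀ (J₀ x) = x)
    (hsa : ∀ x y : H, (inner ℂ (J₀ x) y : ℂ) = inner ℂ x (J₀ y))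
    (hindef : ∃ u v : H, 0 < kform J₀ u u ∧ kform J₀ v v < 0)
    (x : H) (hx : kform J₀ x x ≠ 0)
    (J : H →L[ℂ] H) (hJ : IsFundamentalSymmetry J₀ J) :
    jnorm J₀ J x = Real.sqrt ‖kform J₀ x x‖ ↔ J x = x ∨ J x = -x :=
  jnorm_eq_sqrt_abs_form_iff_general J₀ x J hJ
end

section
/- Assume the form [·,·] is indefinite and let x ∈ H with x ≠ 0 and [x, x] = 0. Then the set of real numbers { ‖x‖_J : J is a fundamental symmetry of (H, [·,·]) } is exactly the open half-line (0, ∞). -/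
open scoped ComplexOrder

/-! Every `[·,·]`-unitary `V` turns `J₀` into the fundamental symmetry `V⁻¹ J₀ V`, for which
`[V⁻¹ J₀ V y, z] = ⟪V y, V z⟫`, so `‖x‖_J = ‖V x‖`. For a neutral `x ≠ 0`, the unit vectors
`e = x / ‖x‖` and `f = J₀ e` are orthogonal and swapped by `J₀`; in these light-cone coordinates
the squeeze `e ↦ t e`, `f ↦ t⁻¹ f` (identity on `{e, f}ᗮ`) is `[·,·]`-unitary and maps `x` to
`t x`. Hence `‖x‖_J` takes every value `t ‖x‖`, `t > 0`; positivity of `[J x, x]` gives the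
converse. -/

open scoped InnerProductSpace ComplexConjugate

section

variable {H : Type*} [NormedAddCommGroup H] [InnerProductSpace ℂ H] {J₀ : H →L[ℂ] H}

lemma kform_conj_symm (hsa : ∀ y z : H, ⟪J₀ y, z⟫_ℂ = ⟪y, J₀ z⟫_ℂ) (y z : H) :
    conj (kform J₀ y z) = kform J₀ z y := by
  rw [kform, kform, inner_conj_symm, hsa]

lemma IsFundamentalSymmetry.jnorm_pos {J : H →L[ℂ] H} (hJ : IsFundamentalSymmetry J₀ J)
    {y : H} (hy : y ≠ 0) : 0 < jnorm J₀ J y :=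
  Real.sqrt_pos.2 (Complex.pos_iff.1 (hJ.2.2 y hy)).1

noncomputable def pullbackSymmetry (J₀ : H →L[ℂ] H) (V : H ≃L[ℂ] H) : H →L[ℂ] H :=
  (V.symm : H →L[ℂ] H) ∘L J₀ ∘L (V : H →L[ℂ] H)

variable {V : H ≃L[ℂ] H}

lemma kform_pullbackSymmetry_apply (hinv : ∀ y, J₀ (J₀ y) = y)
    (hV : ∀ y z, kform J₀ (V y) (V z) = kform J₀ y z) (y z : H) :
    kform J₀ (pullbackSymmetry J₀ V y) z = ⟪V y, V z⟫_ℂ := by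
  rw [pullbackSymmetry, ContinuousLinearMap.comp_apply, ContinuousLinearMap.comp_apply,
    ← hV, ContinuousLinearEquiv.coe_coe, ContinuousLinearEquiv.coe_coe, V.apply_symm_apply, kform,
    hinv]

theorem isFundamentalSymmetry_pullbackSymmetry (hinv : ∀ y, J₀ (J₀ y) = y)
    (hsa : ∀ y z : H, ⟪J₀ y, z⟫_ℂ = ⟪y, J₀ z⟫_ℂ)
    (hV : ∀ y z, kform J₀ (V y) (V z) = kform J₀ y z) :
    IsFundamentalSymmetry J₀ (pullbackSymmetry J₀ V) := by
  refine ⟨fun y => by simp [pullbackSymmetry, hinv], fun y z => ?_, fun y hy => ?_⟩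
  · rw [kform_pullbackSymmetry_apply hinv hV, ← kform_conj_symm hsa,
      kform_pullbackSymmetry_apply hinv hV, inner_conj_symm]
  · rw [kform_pullbackSymmetry_apply hinv hV]
    exact RCLike.pos_iff.2 ⟨re_inner_self_pos.2 (V.map_ne_zero_iff.2 hy), inner_self_im _⟩

lemma jnorm_pullbackSymmetry (hinv : ∀ y, J₀ (J₀ y) = y)
    (hV : ∀ y z, kform J₀ (V y) (V z) = kform J₀ y z) (y : H) :
    jnorm J₀ (pullbackSymmetry J₀ V) y = ‖V y‖ := by
  rw [jnorm, kform_pullbackSymmetry_apply hinv hV, inner_self_eq_norm_sq_to_K]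
  norm_cast
  exact Real.sqrt_sq (norm_nonneg _)

end

section

variable {H : Type*} [NormedAddCommGroup H] [InnerProductSpace ℂ H] (e f : H) (t : ℝ)

noncomputable def squeeze : H →L[ℂ] H :=
  ContinuousLinearMap.id ℂ H + ((t : ℂ) - 1) • (innerSL ℂ e).smulRight e
    + ((t : ℂ)⁻¹ - 1) • (innerSL ℂ f).smulRight f

lemma squeeze_apply (y : H) :
    squeeze e f t y = y + (((t : ℂ) - 1) * ⟪e, y⟫_ℂ) • e + (((t : ℂ)⁻¹ - 1) * ⟪f, y⟫_ℂ) • f := by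
  simp only [squeeze, add_apply, smul_apply, ContinuousLinearMap.smulRight_apply,
    innerSL_apply_apply, ContinuousLinearMap.id_apply, mul_smul]

lemma squeeze_one : squeeze e f 1 = ContinuousLinearMap.id ℂ H := by
  simp [squeeze]

lemma isSymmetric_squeeze : (squeeze e f t : H →ₗ[ℂ] H).IsSymmetric := by
  intro y z
  simp only [ContinuousLinearMap.coe_coe, squeeze_apply, inner_add_left, inner_add_right,
    inner_smul_left, inner_smul_right, map_mul, map_sub, map_inv₀, map_one, Complex.conj_ofReal,
    inner_conj_symm]
  ring

variable {e f}

lemma map_squeeze {J₀ : H →L[ℂ] H} (hsa : ∀ y z : H, ⟪J₀ y, z⟫_ℂ = ⟪y, J₀ z⟫_ℂ)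
    (hJe : J₀ e = f) (hJf : J₀ f = e) (y : H) :
    J₀ (squeeze e f t y) = squeeze e f t⁻¹ (J₀ y) := by
  rw [squeeze_apply, squeeze_apply, map_add, map_add, map_smul, map_smul, hJe, hJf, ← hsa, ← hsa,
    hJe, hJf, Complex.ofReal_inv, inv_inv]
  module

variable (he : ⟪e, e⟫_ℂ = 1) (hf : ⟪f, f⟫_ℂ = 1) (hef : ⟪e, f⟫_ℂ = 0)

include he hef in
lemma inner_left_squeeze (y : H) : ⟪e, squeeze e f t y⟫_ℂ = t * ⟪e, y⟫_ℂ := by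
  rw [squeeze_apply, inner_add_right, inner_add_right, inner_smul_right, inner_smul_right, he, hef]
  ring

include hf hef in
lemma inner_right_squeeze (y : H) : ⟪f, squeeze e f t y⟫_ℂ = (t : ℂ)⁻¹ * ⟪f, y⟫_ℂ := by
  rw [squeeze_apply, inner_add_right, inner_add_right, inner_smul_right, inner_smul_right, hf,
    inner_eq_zero_symm.1 hef]
  ring

include he hef in
lemma squeeze_apply_left : squeeze e f t e = (t : ℂ) • e := by
  rw [squeeze_apply, he, inner_eq_zero_symm.1 hef]
  module

include he hf hef in
lemma squeeze_squeeze (s : ℝ) (y : H) :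
    squeeze e f s (squeeze e f t y) = squeeze e f (s * t) y := by
  rw [squeeze_apply e f s, inner_left_squeeze t he hef, inner_right_squeeze t hf hef,
    squeeze_apply, squeeze_apply, Complex.ofReal_mul]
  match_scalars <;> ring

include he hf hef in
lemma kform_squeeze {J₀ : H →L[ℂ] H} (hsa : ∀ y z : H, ⟪J₀ y, z⟫_ℂ = ⟪y, J₀ z⟫_ℂ)
    (hJe : J₀ e = f) (hJf : J₀ f = e) (ht : t ≠ 0) (y z : H) :
    kform J₀ (squeeze e f t y) (squeeze e f t z) = kform J₀ y z := by
  rw [kform, map_squeeze t hsa hJe hJf, (isSymmetric_squeeze e f _).apply_clm,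
    squeeze_squeeze _ he hf hef, inv_mul_cancel₀ ht, squeeze_one, ContinuousLinearMap.id_apply,
    kform]

include he hf hef in
noncomputable def squeezeEquiv (ht : t ≠ 0) : H ≃L[ℂ] H :=
  ContinuousLinearEquiv.equivOfInverse (squeeze e f t) (squeeze e f t⁻¹)
    (fun y => by rw [squeeze_squeeze _ he hf hef, inv_mul_cancel₀ ht, squeeze_one]; rfl)
    (fun y => by rw [squeeze_squeeze _ he hf hef, mul_inv_cancel₀ ht, squeeze_one]; rfl)

end

theorem range_jnorm_of_neutral_general
    {H : Type*} [NormedAddCommGroup H] [InnerProductSpace ℂ H]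
    (J₀ : H →L[ℂ] H)
    (hinv : ∀ x, J₀ (J₀ x) = x)
    (hsa : ∀ x y : H, (inner ℂ (J₀ x) y : ℂ) = inner ℂ x (J₀ y))
    (x : H) (hx0 : x ≠ 0) (hx : kform J₀ x x = 0) :
    {r : ℝ | ∃ J : H →L[ℂ] H, IsFundamentalSymmetry J₀ J ∧ jnorm J₀ J x = r} =
      Set.Ioi (0 : ℝ) := by
  ext r
  refine ⟨fun ⟨J, hJ, hr⟩ => hr ▸ hJ.jnorm_pos hx0, fun (hr : 0 < r) => ?_⟩
  have hnx : ‖x‖ ≠ 0 := norm_ne_zero_iff.2 hx0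
  set e : H := (‖x‖⁻¹ : ℂ) • x
  have hxe : x = (‖x‖ : ℂ) • e := by simp [e, smul_smul, hnx]
  have he : ⟪e, e⟫_ℂ = 1 := by
    rw [inner_self_eq_norm_sq_to_K, show ‖e‖ = 1 from norm_smul_inv_norm hx0]
    simp
  have hf : ⟪J₀ e, J₀ e⟫_ℂ = 1 := by rw [hsa, hinv, he]
  have hef : ⟪e, J₀ e⟫_ℂ = 0 := by
    rw [kform] at hx
    simp [← hsa, e, hx]
  have ht : r / ‖x‖ ≠ 0 := by positivity
  have hV := kform_squeeze (r / ‖x‖) he hf hef hsa rfl (hinv e) ht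
  refine ⟨pullbackSymmetry J₀ (squeezeEquiv _ he hf hef ht),
    isFundamentalSymmetry_pullbackSymmetry hinv hsa hV, ?_⟩
  rw [jnorm_pullbackSymmetry hinv hV]
  change ‖squeeze e (J₀ e) (r / ‖x‖) x‖ = r
  have hVx : squeeze e (J₀ e) (r / ‖x‖) x = ((r / ‖x‖ : ℝ) : ℂ) • x := by
    conv_lhs => rw [hxe]
    rw [map_smul, squeeze_apply_left _ he hef, smul_comm, ← hxe]
  rw [hVx, norm_smul, Complex.norm_real, Real.norm_of_nonneg (by positivity)]
  field_simp

theorem range_jnorm_of_neutral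
    {H : Type*} [NormedAddCommGroup H] [InnerProductSpace ℂ H] [CompleteSpace H]
    (J₀ : H →L[ℂ] H)
    (hinv : ∀ x, J₀ (J₀ x) = x)
    (hsa : ∀ x y : H, (inner ℂ (J₀ x) y : ℂ) = inner ℂ x (J₀ y))
    (hindef : ∃ u v : H, 0 < kform J₀ u u ∧ kform J₀ v v < 0)
    (x : H) (hx0 : x ≠ 0) (hx : kform J₀ x x = 0) :
    {r : ℝ | ∃ J : H →L[ℂ] H, IsFundamentalSymmetry J₀ J ∧ jnorm J₀ J x = r} =
      Set.Ioi (0 : ℝ) :=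
  range_jnorm_of_neutral_general J₀ hinv hsa x hx0 hx
end

section
/- Let x ∈ H with x ≠ 0 and [x, x] = 0. Then for each real number a > 0 there exists a fundamental symmetry J_a of (H, [·,·]) such that ‖x‖_{J_a} = a. -/
open scoped ComplexOrder

/-!
Normalize `x` to a unit vector `u`. Since `x` is neutral, `u` and `J₀ u` are orthonormal, so the
operator `B` scaling `u` by `t > 0` and `J₀ u` by `t⁻¹` (and fixing their orthogonal complement) is
symmetric and positive definite; conjugation by `J₀` swaps `u` and `J₀ u`, i.e. turns `B` into
`B⁻¹`, so `B J₀ B = J₀`. Hence `J := J₀ B` is a fundamental symmetry, with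
`[J u, u] = ⟪B u, u⟫ = t`, and `t = (a / ‖x‖)²` gives `‖x‖_J = a`.
-/

open scoped InnerProductSpace
open ContinuousLinearMap InnerProductSpace

section KreinSpace

variable {H : Type*} [NormedAddCommGroup H] [InnerProductSpace ℂ H]

theorem kform_smul_left (J₀ : H →L[ℂ] H) (c : ℂ) (x y : H) :
    kform J₀ (c • x) y = starRingEnd ℂ c * kform J₀ x y := by
  simp only [kform, map_smul, inner_smul_left]

theorem kform_smul_right (J₀ : H →L[ℂ] H) (c : ℂ) (x y : H) :
    kform J₀ x (c • y) = c * kform J₀ x y := by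
  simp only [kform, inner_smul_right]

theorem jnorm_smul (J₀ J : H →L[ℂ] H) (c : ℂ) (x : H) :
    jnorm J₀ J (c • x) = ‖c‖ * jnorm J₀ J x := by
  have hc : starRingEnd ℂ c * c = ((‖c‖ ^ 2 : ℝ) : ℂ) := by
    rw [Complex.conj_mul']; push_cast; rfl
  rw [jnorm, jnorm, map_smul, kform_smul_left, kform_smul_right, ← mul_assoc, hc,
    Complex.re_ofReal_mul, Real.sqrt_mul (by positivity), Real.sqrt_sq (norm_nonneg c)]

variable {J₀ : H →L[ℂ] H}

theorem norm_map_of_involutive_of_isSymmetric (hinv : ∀ x, J₀ (J₀ x) = x)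
    (hsa : (J₀ : H →ₗ[ℂ] H).IsSymmetric) (x : H) : ‖J₀ x‖ = ‖x‖ := by
  have h : ‖J₀ x‖ ^ 2 = ‖x‖ ^ 2 := by
    rw [← inner_self_eq_norm_sq (𝕜 := ℂ), ← inner_self_eq_norm_sq (𝕜 := ℂ)]
    have := hsa x (J₀ x)
    simp only [ContinuousLinearMap.coe_coe, hinv] at this
    rw [this]
  exact (pow_left_inj₀ (norm_nonneg _) (norm_nonneg _) two_ne_zero).mp h

theorem orthonormal_self_apply_of_kform_self_eq_zero (hinv : ∀ x, J₀ (J₀ x) = x)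
    (hsa : (J₀ : H →ₗ[ℂ] H).IsSymmetric) {u : H} (hu : ‖u‖ = 1) (hu0 : kform J₀ u u = 0) :
    Orthonormal ℂ ![u, J₀ u] := by
  have huJu : ⟪u, J₀ u⟫_ℂ = 0 := (hsa u u).symm.trans hu0
  simp [orthonormal_vecCons_iff, hu, huJu, norm_map_of_involutive_of_isSymmetric hinv hsa]

theorem kform_comp_apply (hinv : ∀ x, J₀ (J₀ x) = x) (B : H →L[ℂ] H) (x y : H) :
    kform J₀ ((J₀ ∘L B) x) y = ⟪B x, y⟫_ℂ := by
  rw [kform, comp_apply, hinv]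

/-- For symmetric `B`, the condition `B J₀ B = J₀` says that `B` is unitary for the Krein form. -/
theorem isFundamentalSymmetry_comp (hinv : ∀ x, J₀ (J₀ x) = x)
    (hsa : (J₀ : H →ₗ[ℂ] H).IsSymmetric) {B : H →L[ℂ] H} (hB : (B : H →ₗ[ℂ] H).IsSymmetric)
    (hBJB : B ∘L J₀ ∘L B = J₀) (hpos : ∀ x, x ≠ 0 → 0 < ⟪B x, x⟫_ℂ) :
    IsFundamentalSymmetry J₀ (J₀ ∘L B) := by
  refine ⟨fun x => ?_, fun x y => ?_, fun x hx => ?_⟩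
  · simpa [hinv] using congrArg J₀ (DFunLike.congr_fun hBJB x)
  · rw [kform_comp_apply hinv, kform, comp_apply]
    calc ⟪B x, y⟫_ℂ = ⟪x, B y⟫_ℂ := hB x y
      _ = ⟪x, J₀ (J₀ (B y))⟫_ℂ := by rw [hinv]
      _ = ⟪J₀ x, J₀ (B y)⟫_ℂ := (hsa x _).symm
  · exact kform_comp_apply hinv B x x ▸ hpos x hx

end KreinSpace

section SqueezeMap

variable {H : Type*} [NormedAddCommGroup H] [InnerProductSpace ℂ H]

/-- When `v = J₀ u` with `u` a neutral unit vector, `u` and `v` are light-cone coordinates of a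
hyperbolic plane of the Krein space, and this map is a Lorentz boost of that plane. -/
noncomputable def squeezeMap (u v : H) (t : ℝ) : H →L[ℂ] H :=
  1 + ((t : ℂ) - 1) • rankOne ℂ u u + ((t : ℂ)⁻¹ - 1) • rankOne ℂ v v

theorem squeezeMap_apply (u v : H) (t : ℝ) (y : H) :
    squeezeMap u v t y = y + ((t : ℂ) - 1) • ⟪u, y⟫_ℂ • u + ((t : ℂ)⁻¹ - 1) • ⟪v, y⟫_ℂ • v := by
  simp [squeezeMap]

theorem squeezeMap_one (u v : H) : squeezeMap u v 1 = 1 := by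
  simp [squeezeMap]

theorem squeezeMap_swap (u v : H) (t : ℝ) : squeezeMap v u t = squeezeMap u v t⁻¹ := by
  simp only [squeezeMap, Complex.ofReal_inv, inv_inv]
  abel

theorem isSymmetric_squeezeMap (u v : H) (t : ℝ) :
    (squeezeMap u v t : H →ₗ[ℂ] H).IsSymmetric := by
  intro x y
  simp only [coe_coe, squeezeMap_apply, inner_add_left, inner_add_right, inner_smul_left,
    inner_smul_right, map_sub, map_inv₀, Complex.conj_ofReal, map_one, ← inner_conj_symm x u,
    ← inner_conj_symm x v]
  ring

variable {u v : H}

theorem Orthonormal.inner_pair (huv : Orthonormal ℂ ![u, v]) :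
    ⟪u, u⟫_ℂ = 1 ∧ ⟪v, v⟫_ℂ = 1 ∧ ⟪u, v⟫_ℂ = 0 ∧ ⟪v, u⟫_ℂ = 0 := by
  obtain ⟨hu, hperp, hv, -⟩ := orthonormal_vecCons_iff.mp huv
  have huv : ⟪u, v⟫_ℂ = 0 := hperp 0
  exact ⟨inner_self_eq_one_of_norm_eq_one hu, inner_self_eq_one_of_norm_eq_one (hv 0), huv,
    inner_eq_zero_symm.mp huv⟩

theorem squeezeMap_apply_left (huv : Orthonormal ℂ ![u, v]) (t : ℝ) :
    squeezeMap u v t u = (t : ℂ) • u := by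
  obtain ⟨huu, -, -, hvu⟩ := huv.inner_pair
  rw [squeezeMap_apply, huu, hvu]
  module

theorem squeezeMap_comp (huv : Orthonormal ℂ ![u, v]) (s t : ℝ) :
    squeezeMap u v s ∘L squeezeMap u v t = squeezeMap u v (s * t) := by
  obtain ⟨huu, hvv, huv, hvu⟩ := huv.inner_pair
  ext y
  simp only [comp_apply, squeezeMap_apply, inner_add_right, inner_smul_right, huu, hvv, huv,
    hvu, Complex.ofReal_mul]
  match_scalars <;> ring

theorem inner_squeezeMap_self (u v : H) (t : ℝ) (y : H) :
    ⟪squeezeMap u v t y, y⟫_ℂ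
      = ((‖y‖ ^ 2 + (t - 1) * ‖⟪u, y⟫_ℂ‖ ^ 2 + (t⁻¹ - 1) * ‖⟪v, y⟫_ℂ‖ ^ 2 : ℝ) : ℂ) := by
  have hyy : ⟪y, y⟫_ℂ = ((‖y‖ ^ 2 : ℝ) : ℂ) := by simp [inner_self_eq_norm_sq_to_K]
  simp only [squeezeMap_apply, inner_add_left, inner_smul_left, map_sub, map_inv₀,
    Complex.conj_ofReal, map_one, Complex.conj_mul', hyy]
  push_cast
  ring

theorem inner_squeezeMap_self_pos (huv : Orthonormal ℂ ![u, v]) {t : ℝ} (ht : 0 < t) {y : H}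
    (hy : y ≠ 0) : 0 < ⟪squeezeMap u v t y, y⟫_ℂ := by
  rw [inner_squeezeMap_self, Complex.zero_lt_real]
  have hbessel : ‖⟪u, y⟫_ℂ‖ ^ 2 + ‖⟪v, y⟫_ℂ‖ ^ 2 ≤ ‖y‖ ^ 2 := by
    simpa [Fin.sum_univ_two] using huv.sum_inner_products_le (s := Finset.univ) y
  have hy : 0 < ‖y‖ ^ 2 := by positivity
  by_cases h0 : ⟪u, y⟫_ℂ = 0 ∧ ⟪v, y⟫_ℂ = 0
  · simp [h0, hy]
  have hpos : 0 < t * ‖⟪u, y⟫_ℂ‖ ^ 2 + t⁻¹ * ‖⟪v, y⟫_ℂ‖ ^ 2 := by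
    rcases not_and_or.mp h0 with h | h <;> positivity
  linarith

variable {J₀ : H →L[ℂ] H}

theorem comp_squeezeMap_comp (hinv : ∀ x, J₀ (J₀ x) = x) (hsa : (J₀ : H →ₗ[ℂ] H).IsSymmetric)
    (u v : H) (t : ℝ) : J₀ ∘L squeezeMap u v t ∘L J₀ = squeezeMap (J₀ u) (J₀ v) t := by
  have hJ : ∀ w y, ⟪w, J₀ y⟫_ℂ = ⟪J₀ w, y⟫_ℂ := fun w y => (hsa w y).symm
  ext y
  simp only [comp_apply, squeezeMap_apply, map_add, map_smul, hinv, hJ]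

theorem squeezeMap_comp_comp_self (hinv : ∀ x, J₀ (J₀ x) = x)
    (hsa : (J₀ : H →ₗ[ℂ] H).IsSymmetric) (huv : Orthonormal ℂ ![u, J₀ u]) {t : ℝ} (ht : t ≠ 0) :
    squeezeMap u (J₀ u) t ∘L J₀ ∘L squeezeMap u (J₀ u) t = J₀ := by
  have hconj : J₀ ∘L squeezeMap u (J₀ u) t ∘L J₀ = squeezeMap u (J₀ u) t⁻¹ := by
    rw [comp_squeezeMap_comp hinv hsa, hinv, squeezeMap_swap]
  ext y
  calc squeezeMap u (J₀ u) t (J₀ (squeezeMap u (J₀ u) t y))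
      = J₀ ((J₀ ∘L squeezeMap u (J₀ u) t ∘L J₀) (squeezeMap u (J₀ u) t y)) := (hinv _).symm
    _ = J₀ ((squeezeMap u (J₀ u) t⁻¹ ∘L squeezeMap u (J₀ u) t) y) := by rw [hconj]; rfl
    _ = J₀ y := by rw [squeezeMap_comp huv, inv_mul_cancel₀ ht, squeezeMap_one]; rfl

theorem jnorm_comp_squeezeMap_left (hinv : ∀ x, J₀ (J₀ x) = x) (huv : Orthonormal ℂ ![u, v])
    (t : ℝ) : jnorm J₀ (J₀ ∘L squeezeMap u v t) u = √t := by
  rw [jnorm, kform_comp_apply hinv, squeezeMap_apply_left huv, inner_smul_left,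
    huv.inner_pair.1, Complex.conj_ofReal, mul_one, Complex.ofReal_re]

end SqueezeMap

theorem exists_fundamentalSymmetry_jnorm_eq_of_neutral_general
    {H : Type*} [NormedAddCommGroup H] [InnerProductSpace ℂ H]
    (J₀ : H →L[ℂ] H)
    (hinv : ∀ x, J₀ (J₀ x) = x)
    (hsa : ∀ x y : H, (inner ℂ (J₀ x) y : ℂ) = inner ℂ x (J₀ y))
    (x : H) (hx0 : x ≠ 0) (hx : kform J₀ x x = 0)
    (a : ℝ) (ha : 0 < a) :
    ∃ Ja : H →L[ℂ] H, IsFundamentalSymmetry J₀ Ja ∧ jnorm J₀ Ja x = a := by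
  have hnx : 0 < ‖x‖ := norm_pos_iff.mpr hx0
  set u : H := (‖x‖ : ℂ)⁻¹ • x
  have hxu : x = (‖x‖ : ℂ) • u := by
    rw [smul_smul, mul_inv_cancel₀ (by exact_mod_cast hnx.ne'), one_smul]
  have hu0 : kform J₀ u u = 0 := by rw [kform_smul_left, kform_smul_right, hx, mul_zero, mul_zero]
  have huv : Orthonormal ℂ ![u, J₀ u] :=
    orthonormal_self_apply_of_kform_self_eq_zero hinv hsa (norm_smul_inv_norm hx0) hu0
  set t := (a / ‖x‖) ^ 2
  have ht : 0 < t := by positivity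
  refine ⟨J₀ ∘L squeezeMap u (J₀ u) t, isFundamentalSymmetry_comp hinv hsa
    (isSymmetric_squeezeMap _ _ _) (squeezeMap_comp_comp_self hinv hsa huv ht.ne')
    (fun y hy => inner_squeezeMap_self_pos huv ht hy), ?_⟩
  rw [hxu, jnorm_smul, jnorm_comp_squeezeMap_left hinv huv, Real.sqrt_sq (by positivity),
    Complex.norm_real, Real.norm_of_nonneg hnx.le]
  field_simp

theorem exists_fundamentalSymmetry_jnorm_eq_of_neutral
    {H : Type*} [NormedAddCommGroup H] [InnerProductSpace ℂ H] [CompleteSpace H]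
    (J₀ : H →L[ℂ] H)
    (hinv : ∀ x, J₀ (J₀ x) = x)
    (hsa : ∀ x y : H, (inner ℂ (J₀ x) y : ℂ) = inner ℂ x (J₀ y))
    (x : H) (hx0 : x ≠ 0) (hx : kform J₀ x x = 0)
    (a : ℝ) (ha : 0 < a) :
    ∃ Ja : H →L[ℂ] H, IsFundamentalSymmetry J₀ Ja ∧ jnorm J₀ Ja x = a :=
  exists_fundamentalSymmetry_jnorm_eq_of_neutral_general J₀ hinv hsa x hx0 hx a ha
end
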